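/- For the pair kernel $\Pi_2$ on a countable set $E$, the measures $\delta_a\Pi_2^n$ have first marginal $\delta_a\Pi^n$ and second marginal $\delta_b\Pi^n$ when started from $(a,b)$; consequently, if $\pi$ is invariant for $\Pi$, then for every finite $F\subset E$ and every $n$, $(\delta_{(a,b)}\Pi_2^n)(E^2\setminus F^2)\le \pi(E\setminus F)(1/\pi\{a\}+1/\pi\{b\})$. -/

import Mathlib

open MeasureTheory
open scoped ENNReal

/-- The law at time `n` of the chain `X_{n+1} = f(X_n, V_{n+1})` started at `x`
(iterates of the kernel `Π(x,·) = law (f x V₁)` applied to `δ_x`). -/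
noncomputable def chainIter {E G : Type*} [MeasurableSpace E] [MeasurableSpace G]
    (f : E → G → E) (β : Measure G) (x : E) : ℕ → Measure E
  | 0 => Measure.dirac x
  | n + 1 => (chainIter f β x n).bind fun y => Measure.map (fun v => f y v) β

/-- The law at time `n` of the pair chain for the kernel
`Π₂((x,y),·) = law (f x V₁, f y V₁)` started at `(a,b)`. -/
noncomputable def pairIter {E G : Type*} [MeasurableSpace E] [MeasurableSpace G]
    (f : E → G → E) (β : Measure G) (p : E × E) : ℕ → Measure (E × E)
  | 0 => Measure.dirac p
  | n + 1 => (pairIter f β p n).bind fun q =>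
      Measure.map (fun v => (f q.1 v, f q.2 v)) β

/-! Both coordinates of the pair chain are driven by the same noise through the same `f`, so
each coordinate is a copy of the chain and the marginals of `δ_{(a,b)} Π₂ⁿ` are `δ_a Πⁿ` and
`δ_b Πⁿ`. Invariance gives `π{a} · δ_a Πⁿ(s) ≤ (π Πⁿ)(s) = π(s)`, and `(F × F)ᶜ` is covered by
the preimages of `Fᶜ` under the two projections. -/

namespace MeasureTheory.Measure

variable {α β γ : Type*} [MeasurableSpace α] [MeasurableSpace β] [MeasurableSpace γ]

theorem map_bind {μ : Measure α} {κ : α → Measure β} (hκ : AEMeasurable κ μ) {g : β → γ}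
    (hg : Measurable g) : (μ.bind κ).map g = μ.bind fun x => (κ x).map g := by
  ext s hs
  rw [map_apply hg hs, bind_apply (hg hs) hκ,
    bind_apply (f := fun x => (κ x).map g) hs ((measurable_map g hg).comp_aemeasurable hκ)]
  simp only [map_apply hg hs]

theorem bind_map {μ : Measure α} {g : α → β} (hg : Measurable g) {κ : β → Measure γ}
    (hκ : Measurable κ) : (μ.map g).bind κ = μ.bind fun x => κ (g x) := by
  ext s hs
  rw [bind_apply hs hκ.aemeasurable,
    bind_apply (f := fun x => κ (g x)) hs (hκ.comp hg).aemeasurable,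
    lintegral_map (f := fun b => κ b s) (measurable_coe hs |>.comp hκ) hg]

theorem apply_compl_prod_le (μ : Measure (α × β)) (s : Set α) (t : Set β) :
    μ (s ×ˢ t)ᶜ ≤ μ.map Prod.fst sᶜ + μ.map Prod.snd tᶜ := by
  rw [Set.compl_prod_eq_union, Set.prod_univ, Set.univ_prod]
  refine (measure_union_le _ _).trans (add_le_add ?_ ?_)
  · exact le_map_apply measurable_fst.aemeasurable _
  · exact le_map_apply measurable_snd.aemeasurable _

end MeasureTheory.Measure

section CountableStateSpace

variable {E G : Type*} [MeasurableSpace E] [MeasurableSingletonClass E] [Countable E]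
  [MeasurableSpace G] {f : E → G → E} {β : Measure G}

theorem map_pairIter_of_semiconj (hf : ∀ x, Measurable (f x)) {p : E × E → E}
    (hp : ∀ q v, p (f q.1 v, f q.2 v) = f (p q) v) (x : E × E) (n : ℕ) :
    (pairIter f β x n).map p = chainIter f β (p x) n := by
  have hp_meas : Measurable p := measurable_of_countable p
  induction n with
  | zero => exact Measure.map_dirac' hp_meas x
  | succ n ih =>
    rw [chainIter, ← ih, pairIter,
      Measure.map_bind (measurable_of_countable _).aemeasurable hp_meas,
      Measure.bind_map hp_meas (measurable_of_countable _)]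
    congr 1
    ext1 q
    rw [Measure.map_map hp_meas ((hf q.1).prodMk (hf q.2))]
    simp only [Function.comp_def, hp]

theorem bind_chainIter_of_bind_eq {π : Measure E}
    (hπ : π.bind (fun x => Measure.map (fun v => f x v) β) = π) (n : ℕ) :
    π.bind (fun x => chainIter f β x n) = π := by
  induction n with
  | zero => exact Measure.bind_dirac
  | succ n ih =>
    simp only [chainIter]
    rw [← Measure.bind_bind (measurable_of_countable _).aemeasurable
      (measurable_of_countable _).aemeasurable, ih, hπ]

theorem measure_singleton_mul_chainIter_le {π : Measure E}
    (hπ : π.bind (fun x => Measure.map (fun v => f x v) β) = π) (a : E) (n : ℕ) (s : Set E) :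
    π {a} * chainIter f β a n s ≤ π s :=
  calc π {a} * chainIter f β a n s = ∫⁻ x in {a}, chainIter f β x n s ∂π := by
        rw [lintegral_singleton, mul_comm]
    _ ≤ ∫⁻ x, chainIter f β x n s ∂π := setLIntegral_le_lintegral _ _
    _ = π s := by
        rw [← Measure.bind_apply (Set.to_countable s).measurableSet
          (measurable_of_countable _).aemeasurable, bind_chainIter_of_bind_eq hπ]

theorem chainIter_le_mul_inv {π : Measure E} [IsFiniteMeasure π]
    (hπ : π.bind (fun x => Measure.map (fun v => f x v) β) = π) {a : E} (ha : π {a} ≠ 0)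
    (n : ℕ) (s : Set E) : chainIter f β a n s ≤ π s * (π {a})⁻¹ := by
  rw [← div_eq_mul_inv, ENNReal.le_div_iff_mul_le (.inl ha) (.inl (measure_ne_top π _)),
    mul_comm]
  exact measure_singleton_mul_chainIter_le hπ a n s

end CountableStateSpace

theorem stmt_8_general {E G : Type*} [MeasurableSpace E] [MeasurableSingletonClass E]
    [Countable E] [MeasurableSpace G]
    (f : E → G → E) (hf : ∀ x, Measurable (f x))
    (β : Measure G)
    (π : Measure E) [IsProbabilityMeasure π]
    (hπ : π.bind (fun x => Measure.map (fun v => f x v) β) = π)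
    (a b : E) (ha : 0 < π {a}) (hb : 0 < π {b}) :
    ∀ n : ℕ,
      (pairIter f β (a, b) n).map Prod.fst = chainIter f β a n ∧
      (pairIter f β (a, b) n).map Prod.snd = chainIter f β b n ∧
      ∀ F : Finset E,
        pairIter f β (a, b) n ((↑(F ×ˢ F) : Set (E × E))ᶜ) ≤
          π (↑F : Set E)ᶜ * ((π {a})⁻¹ + (π {b})⁻¹) := by
  intro n
  have hfst := map_pairIter_of_semiconj (β := β) hf (p := Prod.fst) (fun _ _ => rfl) (a, b) n
  have hsnd := map_pairIter_of_semiconj (β := β) hf (p := Prod.snd) (fun _ _ => rfl) (a, b) n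
  refine ⟨hfst, hsnd, fun F => ?_⟩
  rw [Finset.coe_product]
  calc _ ≤ chainIter f β a n (↑F)ᶜ + chainIter f β b n (↑F)ᶜ := by
        simpa only [hfst, hsnd] using
          Measure.apply_compl_prod_le (pairIter f β (a, b) n) (F : Set E) (F : Set E)
    _ ≤ π (↑F)ᶜ * (π {a})⁻¹ + π (↑F)ᶜ * (π {b})⁻¹ :=
        add_le_add (chainIter_le_mul_inv hπ ha.ne' n _) (chainIter_le_mul_inv hπ hb.ne' n _)
    _ = _ := (mul_add _ _ _).symm

/-- the measures `δ_{(a,b)} Π₂ⁿ` have first marginal `δ_a Πⁿ` and second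
marginal `δ_b Πⁿ`; consequently, if `π` is invariant for `Π` and charges `a` and `b`,
then for every finite `F ⊆ E` and every `n`,
`(δ_{(a,b)} Π₂ⁿ)(E² \ F²) ≤ π(E \ F) (1/π{a} + 1/π{b})`. -/
theorem stmt_8 {E G : Type*} [MeasurableSpace E] [MeasurableSingletonClass E]
    [Countable E] [MeasurableSpace G]
    (f : E → G → E) (hf : ∀ x, Measurable (f x))
    (β : Measure G) [IsProbabilityMeasure β]
    (π : Measure E) [IsProbabilityMeasure π]
    (hπ : π.bind (fun x => Measure.map (fun v => f x v) β) = π)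
    (a b : E) (ha : 0 < π {a}) (hb : 0 < π {b}) :
    ∀ n : ℕ,
      (pairIter f β (a, b) n).map Prod.fst = chainIter f β a n ∧
      (pairIter f β (a, b) n).map Prod.snd = chainIter f β b n ∧
      ∀ F : Finset E,
        pairIter f β (a, b) n ((↑(F ×ˢ F) : Set (E × E))ᶜ) ≤
          π (↑F : Set E)ᶜ * ((π {a})⁻¹ + (π {b})⁻¹) :=
  stmt_8_general f hf β π hπ a b ha hb
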